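/- The map ξ : ℂ* → ℂ² given by ξ(t) = ((t−1)²(t+2)/t, (t−1)²(t+1/2)/t²) is injective, and its derivative ξ'(t) vanishes at exactly three points of ℂ*, each a simple (A₂-type) cusp where both coordinate functions have a critical point of order exactly 2. -/

import Mathlib

open Complex

/-- The first coordinate of the Rudolph curve, case (w). -/
noncomputable def rudolphPhi : ℂ → ℂ := fun t => (t - 1) ^ 2 * (t + 2) / t

/-- The second coordinate of the Rudolph curve, case (w). -/
noncomputable def rudolphPsi : ℂ → ℂ := fun t => (t - 1) ^ 2 * (t + 1 / 2) / t ^ 2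

/-!
Off `t = 0` both coordinates are Laurent polynomials, `φ t = t² - 3 + 2/t` and
`ψ t = t - 3/2 + 1/(2t²)`, so `φ s - φ t` and `ψ s - ψ t` both factor through `s - t`.
For `s ≠ t` the cofactors give `st(s + t) = 2` and `2(st)² = s + t`, which force
`(st)³ = 1` and then `(s - t)² = 0`. The derivatives `φ' = 2(t³ - 1)/t²` and
`ψ' = (t³ - 1)/t³` vanish exactly at the cube roots of unity, where `φ'' = (2t³ + 4)/t³ = 6`.
-/

open Polynomial

theorem eq_of_mul_mul_add_eq_two {R : Type*} [CommRing R] [IsReduced R] {s t : R}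
    (hA : s * t * (s + t) = 2) (hB : 2 * (s * t) ^ 2 = s + t) : s = t := by
  have hcube : 2 * (s * t) ^ 3 = 2 := by linear_combination s * t * hB + hA
  have hsq : (s - t) ^ 2 = 0 := by
    linear_combination (-(s + t) - 2 * (s * t) ^ 2) * hB + 2 * s * t * hcube
  exact sub_eq_zero.mp (pow_eq_zero_iff two_ne_zero |>.mp hsq)

theorem rudolphPhi_sub_rudolphPhi {s t : ℂ} (hs : s ≠ 0) (ht : t ≠ 0) :
    rudolphPhi s - rudolphPhi t = (s - t) * (s * t * (s + t) - 2) / (s * t) := by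
  unfold rudolphPhi
  field_simp
  ring

theorem rudolphPsi_sub_rudolphPsi {s t : ℂ} (hs : s ≠ 0) (ht : t ≠ 0) :
    rudolphPsi s - rudolphPsi t = (s - t) * (2 * (s * t) ^ 2 - (s + t)) / (2 * (s * t) ^ 2) := by
  unfold rudolphPsi
  field_simp
  ring

theorem rudolph_injOn :
    Set.InjOn (fun t : ℂ => (rudolphPhi t, rudolphPsi t)) {t : ℂ | t ≠ 0} := by
  rintro s (hs : s ≠ 0) t (ht : t ≠ 0) hst
  obtain ⟨hφ, hψ⟩ := Prod.ext_iff.mp hst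
  by_contra hne
  have hne' : s - t ≠ 0 := sub_ne_zero.mpr hne
  have hst0 : s * t ≠ 0 := mul_ne_zero hs ht
  have hA : s * t * (s + t) - 2 = 0 := by
    simpa [hne', hst0, sub_eq_zero.mpr hφ] using (rudolphPhi_sub_rudolphPhi hs ht).symm
  have hB : 2 * (s * t) ^ 2 - (s + t) = 0 := by
    simpa [hne', hst0, sub_eq_zero.mpr hψ] using (rudolphPsi_sub_rudolphPsi hs ht).symm
  exact hne (eq_of_mul_mul_add_eq_two (sub_eq_zero.mp hA) (sub_eq_zero.mp hB))

theorem hasDerivAt_rudolphPhi {t : ℂ} (ht : t ≠ 0) :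
    HasDerivAt rudolphPhi (2 * (t ^ 3 - 1) / t ^ 2) t := by
  have h := ((((hasDerivAt_id' t).sub_const 1).fun_pow 2).fun_mul
    ((hasDerivAt_id' t).add_const 2)).fun_div (hasDerivAt_id' t) ht
  refine h.congr_deriv ?_
  field_simp
  ring

theorem hasDerivAt_rudolphPsi {t : ℂ} (ht : t ≠ 0) :
    HasDerivAt rudolphPsi ((t ^ 3 - 1) / t ^ 3) t := by
  have h := ((((hasDerivAt_id' t).sub_const 1).fun_pow 2).fun_mul
    ((hasDerivAt_id' t).add_const (1 / 2))).fun_div ((hasDerivAt_id' t).fun_pow 2)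
    (pow_ne_zero 2 ht)
  refine h.congr_deriv ?_
  field_simp
  ring

theorem iteratedDeriv_two_rudolphPhi {t : ℂ} (ht : t ≠ 0) :
    iteratedDeriv 2 rudolphPhi t = (2 * t ^ 3 + 4) / t ^ 3 := by
  have hderiv : deriv rudolphPhi =ᶠ[nhds t] fun x => 2 * (x ^ 3 - 1) / x ^ 2 := by
    filter_upwards [isOpen_ne.mem_nhds ht] with x hx
    exact (hasDerivAt_rudolphPhi hx).deriv
  have h := (((hasDerivAt_pow 3 t).sub_const 1).const_mul 2).fun_div
    ((hasDerivAt_id' t).fun_pow 2) (pow_ne_zero 2 ht)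
  rw [iteratedDeriv_succ, iteratedDeriv_one, hderiv.deriv_eq, h.deriv]
  field_simp
  ring

theorem deriv_rudolphPhi_eq_zero_iff {t : ℂ} (ht : t ≠ 0) :
    deriv rudolphPhi t = 0 ↔ t ^ 3 = 1 := by
  simp [(hasDerivAt_rudolphPhi ht).deriv, ht, sub_eq_zero]

theorem rudolph_cusp_of_pow_three_eq_one {t : ℂ} (h : t ^ 3 = 1) :
    t ≠ 0 ∧ deriv rudolphPhi t = 0 ∧ deriv rudolphPsi t = 0 ∧
      iteratedDeriv 2 rudolphPhi t ≠ 0 := by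
  have ht : t ≠ 0 := by rintro rfl; norm_num at h
  refine ⟨ht, (deriv_rudolphPhi_eq_zero_iff ht).mpr h, ?_, ?_⟩
  · simp [(hasDerivAt_rudolphPsi ht).deriv, h]
  · rw [iteratedDeriv_two_rudolphPhi ht, h]
    norm_num

theorem rudolph_curve_injective_three_cusps :
    Set.InjOn (fun t : ℂ => (rudolphPhi t, rudolphPsi t)) {t : ℂ | t ≠ 0} ∧
    ∃ S : Finset ℂ, S.card = 3 ∧
      (∀ t ∈ S, t ≠ 0 ∧ deriv rudolphPhi t = 0 ∧ deriv rudolphPsi t = 0 ∧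
        iteratedDeriv 2 rudolphPhi t ≠ 0) ∧
      (∀ t : ℂ, t ≠ 0 → deriv rudolphPhi t = 0 → deriv rudolphPsi t = 0 → t ∈ S) := by
  have mem_iff (t : ℂ) : t ∈ nthRootsFinset 3 (1 : ℂ) ↔ t ^ 3 = 1 :=
    mem_nthRootsFinset (by norm_num) 1
  refine ⟨rudolph_injOn, nthRootsFinset 3 1,
    (Complex.isPrimitiveRoot_exp 3 (by norm_num)).card_nthRootsFinset, ?_, ?_⟩
  · exact fun t ht => rudolph_cusp_of_pow_three_eq_one ((mem_iff t).mp ht)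
  · exact fun t ht hφ _ => (mem_iff t).mpr ((deriv_rudolphPhi_eq_zero_iff ht).mp hφ)
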